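/- For any d×d Bernoulli-compatible matrix B and any d×d tail-dependence matrix Λ, the matrix L(B ∘ Λ), obtained from the Hadamard product B ∘ Λ by replacing all diagonal entries with 1, is a tail-dependence matrix. In particular, L(B) is a tail-dependence matrix for every Bernoulli-compatible matrix B (Proposition 4.3). -/

import Mathlib

/-!
Realise `B` by a Bernoulli vector `X`, put `S = {i | X i = 1}`, and take, independently of `S`,
a vector `Y` realising `Λ` and i.i.d. uniforms `U`. The vector `Z` with `Z i = Y i` for `i ∈ S`
and `Z i = U i` otherwise has uniform margins, and conditioning on `S` gives, for `i ≠ j`,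
`P(Z i ≤ u, Z j ≤ u) = P(i, j ∈ S) P(Y i ≤ u, Y j ≤ u) + (1 - P(i, j ∈ S)) u²`.
As `P(i, j ∈ S) = B i j`, the tail coefficient of `(Z i, Z j)` is `B i j * Λ i j`.
The all-ones matrix is realised by a comonotone vector, which gives `L(B)`.
-/

open MeasureTheory ProbabilityTheory Filter Set

noncomputable section

/-- A Bernoulli-compatible matrix: `B i j = E[X i * X j]` for some random vector `X`
taking values in `{0,1}^d` on some probability space. -/
def IsBernoulliCompatible {d : ℕ} (B : Matrix (Fin d) (Fin d) ℝ) : Prop :=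
  ∃ (Ω : Type) (_ : MeasurableSpace Ω) (μ : Measure Ω),
    IsProbabilityMeasure μ ∧
    ∃ X : Ω → Fin d → ℝ, Measurable X ∧
      (∀ ω i, X ω i = 0 ∨ X ω i = 1) ∧
      (∀ i j, B i j = ∫ ω, X ω i * X ω j ∂μ)

/-- The (lower) tail-dependence coefficient of `Yi` and `Yj` exists and equals `l`:
`P(Yi ≤ u, Yj ≤ u)/u → l` as `u ↓ 0`. -/
def HasTailDepCoeff {Ω : Type} [MeasurableSpace Ω] (μ : Measure Ω)
    (Yi Yj : Ω → ℝ) (l : ℝ) : Prop :=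
  Filter.Tendsto (fun u : ℝ => (μ {ω | Yi ω ≤ u ∧ Yj ω ≤ u}).toReal / u)
    (nhdsWithin 0 (Set.Ioi 0)) (nhds l)

/-- The uniform distribution on `[0,1]`. -/
def stdUniform : Measure ℝ := volume.restrict (Set.Icc (0:ℝ) 1)

/-- A tail-dependence matrix: the matrix of pairwise (lower) tail-dependence coefficients
of some random vector with standard uniform margins. -/
def IsTailDependenceMatrix {d : ℕ} (Λ : Matrix (Fin d) (Fin d) ℝ) : Prop :=
  ∃ (Ω : Type) (_ : MeasurableSpace Ω) (μ : Measure Ω),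
    IsProbabilityMeasure μ ∧
    ∃ Y : Ω → Fin d → ℝ, Measurable Y ∧
      (∀ i, μ.map (fun ω => Y ω i) = stdUniform) ∧
      (∀ i j, HasTailDepCoeff μ (fun ω => Y ω i) (fun ω => Y ω j) (Λ i j))

/-- The map `L`: replace all diagonal entries of a square matrix by `1`. -/
def diagOne {d : ℕ} (A : Matrix (Fin d) (Fin d) ℝ) : Matrix (Fin d) (Fin d) ℝ :=
  Matrix.of fun i j => if i = j then 1 else A i j

open scoped Topology

instance : IsProbabilityMeasure stdUniform :=
  ⟨by simp [stdUniform, Real.volume_Icc]⟩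

lemma stdUniform_Iic {u : ℝ} (hu₁ : u ≤ 1) :
    stdUniform (Iic u) = ENNReal.ofReal u := by
  have : Iic u ∩ Icc 0 1 = Icc 0 u := by
    ext x
    simp only [mem_inter_iff, mem_Iic, mem_Icc]
    exact ⟨fun ⟨hu, h0, _⟩ => ⟨h0, hu⟩, fun ⟨h0, hu⟩ => ⟨hu, h0, hu.trans hu₁⟩⟩
  rw [stdUniform, Measure.restrict_apply measurableSet_Iic, this, Real.volume_Icc, sub_zero]

lemma eventuallyEq_stdUniform_Iic :
    (fun u => (stdUniform (Iic u)).toReal) =ᶠ[𝓝[>] 0] id := by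
  filter_upwards [Ioo_mem_nhdsGT zero_lt_one] with u hu
  rw [stdUniform_Iic hu.2.le, ENNReal.toReal_ofReal hu.1.le, id]

lemma tendsto_stdUniform_Iic_div :
    Tendsto (fun u => (stdUniform (Iic u)).toReal / u) (𝓝[>] 0) (𝓝 1) := by
  refine tendsto_const_nhds.congr' ?_
  filter_upwards [eventuallyEq_stdUniform_Iic, self_mem_nhdsWithin] with u hu hu₀
  rw [hu, id, div_self (ne_of_gt hu₀)]

lemma tendsto_stdUniform_Iic_sq_div :
    Tendsto (fun u => (stdUniform (Iic u)).toReal ^ 2 / u) (𝓝[>] 0) (𝓝 0) := by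
  have : Tendsto (fun u : ℝ => u) (𝓝[>] 0) (𝓝 0) := tendsto_nhdsWithin_of_tendsto_nhds tendsto_id
  refine this.congr' ?_
  filter_upwards [eventuallyEq_stdUniform_Iic, self_mem_nhdsWithin] with u hu hu₀
  rw [hu, id, sq, mul_div_cancel_right₀ _ (ne_of_gt hu₀)]

lemma measure_setOf_le_of_map_eq {Ω : Type*} [MeasurableSpace Ω] {μ : Measure Ω} {ρ : Measure ℝ}
    {V : Ω → ℝ} (hV : Measurable V) (hmap : μ.map V = ρ) (u : ℝ) :
    μ {ω | V ω ≤ u} = ρ (Iic u) := by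
  rw [← hmap, Measure.map_apply hV measurableSet_Iic]
  rfl

lemma hasTailDepCoeff_self {Ω : Type} [MeasurableSpace Ω] {μ : Measure Ω} {V : Ω → ℝ}
    (hV : Measurable V) (hmap : μ.map V = stdUniform) : HasTailDepCoeff μ V V 1 := by
  have hIic (u : ℝ) : μ {ω | V ω ≤ u ∧ V ω ≤ u} = stdUniform (Iic u) := by
    simpa only [and_self] using measure_setOf_le_of_map_eq hV hmap u
  simpa only [HasTailDepCoeff, hIic] using tendsto_stdUniform_Iic_div

lemma isTailDependenceMatrix_ones (d : ℕ) :
    IsTailDependenceMatrix (Matrix.of fun _ _ : Fin d => (1 : ℝ)) :=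
  ⟨ℝ, inferInstance, stdUniform, inferInstance, fun u _ => u,
    measurable_pi_lambda _ fun _ => measurable_id, fun _ => Measure.map_id, fun _ _ => hasTailDepCoeff_self measurable_id Measure.map_id⟩

lemma isTailDependenceMatrix_diagOne {d : ℕ} {A : Matrix (Fin d) (Fin d) ℝ} {Ω : Type}
    [MeasurableSpace Ω] (μ : Measure Ω) [IsProbabilityMeasure μ] {Y : Ω → Fin d → ℝ}
    (hY : Measurable Y) (hmarg : ∀ i, μ.map (fun ω => Y ω i) = stdUniform)
    (htail : ∀ i j, i ≠ j → HasTailDepCoeff μ (fun ω => Y ω i) (fun ω => Y ω j) (A i j)) :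
    IsTailDependenceMatrix (diagOne A) := by
  refine ⟨Ω, inferInstance, μ, inferInstance, Y, hY, hmarg, fun i j => ?_⟩
  by_cases hij : i = j
  · subst hij
    simpa only [diagOne, Matrix.of_apply, if_true] using
      hasTailDepCoeff_self (measurable_pi_iff.mp hY i) (hmarg i)
  · simpa only [diagOne, Matrix.of_apply, if_neg hij] using htail i j hij

section PiMeasure

variable {ι : Type*} [Fintype ι] {ρ : Measure ℝ} [IsProbabilityMeasure ρ]

lemma pi_setOf_le (i : ι) (u : ℝ) : Measure.pi (fun _ : ι => ρ) {v | v i ≤ u} = ρ (Iic u) :=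
  measure_setOf_le_of_map_eq (measurable_pi_apply i) (measurePreserving_eval _ i).map_eq u

lemma pi_setOf_le_and_le {i j : ι} (hij : i ≠ j) (u : ℝ) :
    Measure.pi (fun _ : ι => ρ) {v | v i ≤ u ∧ v j ≤ u} = ρ (Iic u) * ρ (Iic u) := by
  have hind : IndepFun (fun v : ι → ℝ => v i) (fun v => v j) (Measure.pi fun _ => ρ) :=
    (iIndepFun_pi (X := fun _ => id) fun _ => aemeasurable_id).indepFun hij
  exact (hind.measure_inter_preimage_eq_mul _ _ measurableSet_Iic measurableSet_Iic).trans
    (congr_arg₂ (· * ·) (pi_setOf_le i u) (pi_setOf_le j u))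

end PiMeasure

section RandomPiecewise

open scoped Classical

variable {ι Ω Ω' : Type*} [Fintype ι] [MeasurableSpace Ω] [MeasurableSpace Ω']
  {μ : Measure Ω} [IsProbabilityMeasure μ] {μ' : Measure Ω'}
  {ρ : Measure ℝ} [IsProbabilityMeasure ρ] {Y : Ω → ι → ℝ} {S : Ω' → Set ι}

lemma prod_pi_setOf_piecewise_le (hY : Measurable Y) (hmarg : ∀ i, μ.map (fun ω => Y ω i) = ρ)
    (s : Set ι) (i : ι) (u : ℝ) :
    μ.prod (Measure.pi fun _ : ι => ρ) {p | s.piecewise (Y p.1) p.2 i ≤ u} = ρ (Iic u) := by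
  by_cases hi : i ∈ s
  · have : {p : Ω × (ι → ℝ) | s.piecewise (Y p.1) p.2 i ≤ u} = {ω | Y ω i ≤ u} ×ˢ univ := by
      ext p; simp [hi]
    rw [this, Measure.prod_prod, measure_univ, mul_one,
      measure_setOf_le_of_map_eq (measurable_pi_iff.mp hY i) (hmarg i)]
  · have : {p : Ω × (ι → ℝ) | s.piecewise (Y p.1) p.2 i ≤ u} = univ ×ˢ {v | v i ≤ u} := by
      ext p; simp [hi]
    rw [this, Measure.prod_prod, measure_univ, one_mul, pi_setOf_le]

lemma prod_pi_setOf_piecewise_le_and_le (hY : Measurable Y)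
    (hmarg : ∀ i, μ.map (fun ω => Y ω i) = ρ) (s : Set ι) {i j : ι} (hij : i ≠ j) (u : ℝ) :
    μ.prod (Measure.pi fun _ : ι => ρ)
        {p | s.piecewise (Y p.1) p.2 i ≤ u ∧ s.piecewise (Y p.1) p.2 j ≤ u} =
      if i ∈ s ∧ j ∈ s then μ {ω | Y ω i ≤ u ∧ Y ω j ≤ u} else ρ (Iic u) * ρ (Iic u) := by
  have hY_le (k : ι) := measure_setOf_le_of_map_eq (measurable_pi_iff.mp hY k) (hmarg k) u
  set A := {p : Ω × (ι → ℝ) | s.piecewise (Y p.1) p.2 i ≤ u ∧ s.piecewise (Y p.1) p.2 j ≤ u}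
    with hA
  by_cases hi : i ∈ s <;> by_cases hj : j ∈ s
  · have : A = {ω | Y ω i ≤ u ∧ Y ω j ≤ u} ×ˢ univ := by ext p; simp [hA, hi, hj]
    rw [this, Measure.prod_prod, measure_univ, mul_one, if_pos ⟨hi, hj⟩]
  · have : A = {ω | Y ω i ≤ u} ×ˢ {v | v j ≤ u} := by ext p; simp [hA, hi, hj]
    rw [this, Measure.prod_prod, hY_le, pi_setOf_le, if_neg (by tauto)]
  · have : A = {ω | Y ω j ≤ u} ×ˢ {v | v i ≤ u} := by ext p; simp [hA, hi, hj, and_comm]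
    rw [this, Measure.prod_prod, hY_le, pi_setOf_le, if_neg (by tauto)]
  · have : A = univ ×ˢ {v | v i ≤ u ∧ v j ≤ u} := by ext p; simp [hA, hi, hj]
    rw [this, Measure.prod_prod, measure_univ, one_mul, pi_setOf_le_and_le hij, if_neg (by tauto)]

def randomPiecewise (S : Ω' → Set ι) (Y : Ω → ι → ℝ) (ω : Ω' × Ω × (ι → ℝ)) : ι → ℝ :=
  (S ω.1).piecewise (Y ω.2.1) ω.2.2

omit [Fintype ι] in
lemma measurable_randomPiecewise (hS : ∀ i, MeasurableSet {ω | i ∈ S ω}) (hY : Measurable Y) :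
    Measurable (randomPiecewise S Y) :=
  measurable_pi_lambda _ fun i =>
    Measurable.ite (measurable_fst (hS i)) ((measurable_pi_iff.mp hY i).comp measurable_snd.fst)
      ((measurable_pi_apply i).comp measurable_snd.snd)

lemma measure_randomPiecewise_le [IsProbabilityMeasure μ']
    (hS : ∀ i, MeasurableSet {ω | i ∈ S ω}) (hY : Measurable Y)
    (hmarg : ∀ i, μ.map (fun ω => Y ω i) = ρ) (i : ι) (u : ℝ) :
    μ'.prod (μ.prod (Measure.pi fun _ : ι => ρ)) {ω | randomPiecewise S Y ω i ≤ u} = ρ (Iic u) := by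
  rw [Measure.prod_apply (measurableSet_le
    (measurable_pi_iff.mp (measurable_randomPiecewise hS hY) i) measurable_const)]
  simp only [preimage_ofPred_eq, randomPiecewise, prod_pi_setOf_piecewise_le hY hmarg,
    lintegral_const, measure_univ, mul_one]

lemma measure_randomPiecewise_le_and_le (hS : ∀ i, MeasurableSet {ω | i ∈ S ω})
    (hY : Measurable Y) (hmarg : ∀ i, μ.map (fun ω => Y ω i) = ρ) {i j : ι} (hij : i ≠ j)
    (u : ℝ) :
    μ'.prod (μ.prod (Measure.pi fun _ : ι => ρ))
        {ω | randomPiecewise S Y ω i ≤ u ∧ randomPiecewise S Y ω j ≤ u} =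
      μ' {ω | i ∈ S ω ∧ j ∈ S ω} * μ {ω | Y ω i ≤ u ∧ Y ω j ≤ u} +
        μ' {ω | i ∈ S ω ∧ j ∈ S ω}ᶜ * (ρ (Iic u) * ρ (Iic u)) := by
  have hZ := measurable_pi_iff.mp (measurable_randomPiecewise hS hY)
  have hmeas : MeasurableSet {ω | randomPiecewise S Y ω i ≤ u ∧ randomPiecewise S Y ω j ≤ u} :=
    (measurableSet_le (hZ i) measurable_const).inter (measurableSet_le (hZ j) measurable_const)
  set E := {ω | i ∈ S ω ∧ j ∈ S ω}
  have hE : MeasurableSet E := (hS i).inter (hS j)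
  set a := μ {ω | Y ω i ≤ u ∧ Y ω j ≤ u}
  set b := ρ (Iic u) * ρ (Iic u)
  calc _ = ∫⁻ ω, E.piecewise (fun _ => a) (fun _ => b) ω ∂μ' := by
        rw [Measure.prod_apply hmeas]
        congr with ω
        exact prod_pi_setOf_piecewise_le_and_le hY hmarg (S ω) hij u
    _ = μ' E * a + μ' Eᶜ * b := by
        rw [lintegral_piecewise hE, setLIntegral_const, setLIntegral_const,
          mul_comm a, mul_comm b]

lemma map_randomPiecewise_eval [IsProbabilityMeasure μ'] (hS : ∀ i, MeasurableSet {ω | i ∈ S ω})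
    (hY : Measurable Y) (hmarg : ∀ i, μ.map (fun ω => Y ω i) = ρ) (i : ι) :
    (μ'.prod (μ.prod (Measure.pi fun _ : ι => ρ))).map (fun ω => randomPiecewise S Y ω i) = ρ := by
  have hZi := measurable_pi_iff.mp (measurable_randomPiecewise hS hY) i
  have := Measure.isProbabilityMeasure_map (μ := μ'.prod (μ.prod (Measure.pi fun _ : ι => ρ)))
    hZi.aemeasurable
  refine Measure.ext_of_Iic _ _ fun u => ?_
  rw [Measure.map_apply hZi measurableSet_Iic]
  exact measure_randomPiecewise_le hS hY hmarg i u

end RandomPiecewise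

open scoped Classical in
lemma hasTailDepCoeff_randomPiecewise {ι Ω Ω' : Type} [Fintype ι] [MeasurableSpace Ω]
    [MeasurableSpace Ω'] {μ : Measure Ω} [IsProbabilityMeasure μ] {μ' : Measure Ω'}
    [IsProbabilityMeasure μ'] {Y : Ω → ι → ℝ} {S : Ω' → Set ι}
    (hS : ∀ i, MeasurableSet {ω | i ∈ S ω}) (hY : Measurable Y)
    (hmarg : ∀ i, μ.map (fun ω => Y ω i) = stdUniform) {i j : ι} (hij : i ≠ j) {l : ℝ}
    (hl : HasTailDepCoeff μ (fun ω => Y ω i) (fun ω => Y ω j) l) :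
    HasTailDepCoeff (μ'.prod (μ.prod (Measure.pi fun _ : ι => stdUniform)))
      (fun ω => randomPiecewise S Y ω i) (fun ω => randomPiecewise S Y ω j)
      (μ'.real {ω | i ∈ S ω ∧ j ∈ S ω} * l) := by
  set p := μ'.real {ω | i ∈ S ω ∧ j ∈ S ω} with hp
  have hcompl : (μ' {ω | i ∈ S ω ∧ j ∈ S ω}ᶜ).toReal = 1 - p :=
    probReal_compl_eq_one_sub ((hS i).inter (hS j))
  have hratio (u : ℝ) :
      (μ'.prod (μ.prod (Measure.pi fun _ : ι => stdUniform))
        {ω | randomPiecewise S Y ω i ≤ u ∧ randomPiecewise S Y ω j ≤ u}).toReal / u =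
      p * ((μ {ω | Y ω i ≤ u ∧ Y ω j ≤ u}).toReal / u) +
        (1 - p) * ((stdUniform (Iic u)).toReal ^ 2 / u) := by
    rw [measure_randomPiecewise_le_and_le hS hY hmarg hij u,
      ENNReal.toReal_add (by finiteness) (by finiteness), ENNReal.toReal_mul, ENNReal.toReal_mul,
      ENNReal.toReal_mul, hcompl, hp, measureReal_def]
    ring
  simp only [HasTailDepCoeff, hratio]
  simpa using (hl.const_mul p).add (tendsto_stdUniform_Iic_sq_div.const_mul (1 - p))

lemma IsBernoulliCompatible.exists_randomSet {d : ℕ} {B : Matrix (Fin d) (Fin d) ℝ}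
    (hB : IsBernoulliCompatible B) :
    ∃ (Ω : Type) (_ : MeasurableSpace Ω) (μ : Measure Ω), IsProbabilityMeasure μ ∧
      ∃ S : Ω → Set (Fin d), (∀ i, MeasurableSet {ω | i ∈ S ω}) ∧
        ∀ i j, B i j = μ.real {ω | i ∈ S ω ∧ j ∈ S ω} := by
  obtain ⟨Ω, _, μ, hμ, X, hX, hX01, hBX⟩ := hB
  have hS (i : Fin d) : MeasurableSet {ω | X ω i = 1} :=
    measurable_pi_iff.mp hX i (measurableSet_singleton 1)
  refine ⟨Ω, _, μ, hμ, fun ω => {i | X ω i = 1}, hS, fun i j => ?_⟩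
  have hprod : (fun ω => X ω i * X ω j) = {ω | X ω i = 1 ∧ X ω j = 1}.indicator 1 := by
    funext ω
    rcases hX01 ω i with hi | hi <;> rcases hX01 ω j with hj | hj <;> simp [hi, hj]
  rw [hBX, hprod]
  exact integral_indicator_one ((hS i).inter (hS j))

theorem isTailDependenceMatrix_diagOne_measureReal_mul {d : ℕ} {Λ : Matrix (Fin d) (Fin d) ℝ}
    (hΛ : IsTailDependenceMatrix Λ) {Ω' : Type} [MeasurableSpace Ω'] (μ' : Measure Ω')
    [IsProbabilityMeasure μ'] {S : Ω' → Set (Fin d)} (hS : ∀ i, MeasurableSet {ω | i ∈ S ω}) :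
    IsTailDependenceMatrix
      (diagOne (Matrix.of fun i j => μ'.real {ω | i ∈ S ω ∧ j ∈ S ω} * Λ i j)) := by
  obtain ⟨Ω, _, μ, _, Y, hY, hmarg, htail⟩ := hΛ
  exact isTailDependenceMatrix_diagOne (μ'.prod (μ.prod (Measure.pi fun _ => stdUniform)))
    (measurable_randomPiecewise hS hY) (map_randomPiecewise_eval hS hY hmarg)
    fun i j hij => hasTailDepCoeff_randomPiecewise hS hY hmarg hij (htail i j)

/-- Proposition 4.3: for `B` Bernoulli-compatible and `Λ` a tail-dependence matrix,
`L(B ∘ Λ)` is a tail-dependence matrix; in particular `L(B)` is a tail-dependence matrix. -/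
theorem L_hadamard_tail_dependence {d : ℕ} (B Λ : Matrix (Fin d) (Fin d) ℝ)
    (hB : IsBernoulliCompatible B) (hΛ : IsTailDependenceMatrix Λ) :
    IsTailDependenceMatrix (diagOne (Matrix.of fun i j => B i j * Λ i j)) ∧
    IsTailDependenceMatrix (diagOne B) := by
  obtain ⟨Ω, _, μ, _, S, hS, hBS⟩ := hB.exists_randomSet
  have hadamard {Λ' : Matrix (Fin d) (Fin d) ℝ} (hΛ' : IsTailDependenceMatrix Λ') :
      IsTailDependenceMatrix (diagOne (Matrix.of fun i j => B i j * Λ' i j)) := by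
    simpa only [hBS] using isTailDependenceMatrix_diagOne_measureReal_mul hΛ' μ hS
  refine ⟨hadamard hΛ, ?_⟩
  have hones := hadamard (isTailDependenceMatrix_ones d)
  simp only [Matrix.of_apply, mul_one] at hones
  exact hones
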